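/- Let $p$ be a periodic point of period $q$ for a bijection $f: M \to M$, and let $A: M \to GL(d,\mathbb{C})$ generate a cocycle over $f$. For any matrix $P \in GL(d,\mathbb{C})$ and any $\epsilon > 0$, there is a matrix $B_0 \in GL(d,\mathbb{C})$ with $\|B_0 - A(p)\| < \epsilon$ such that, defining $B$ to equal $A$ off $\{p\}$ and $B(p) = B_0$, all eigenvalues of the matrix $B^q(p) = A(f^{q-1}p)\cdots A(fp)\, B_0$ have pairwise distinct absolute values. -/

import Mathlib

/-!
Since the orbit of `p` returns to `p` only at time `q`, `B^q(p) = Q * B₀` with `Q` the product of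
`A` along the rest of the orbit, independent of `B₀`. So it suffices that the invertible operators
whose eigenvalues have pairwise distinct moduli are dense; left multiplication by `Q⁻¹` then
carries them to a dense set of admissible `B₀`. Density: `T + t` has eigenvalues `λ + t`, and
`‖λ + t‖ = ‖μ + t‖` means that `t` lies on the perpendicular bisector of `-λ` and `-μ`; together
with the points `t = -λ` these finitely many bisectors form a Lebesgue-null set, so almost every
small `t` works.
-/

/-- Forward cocycle iterates `B^n(x) = B(f^{n-1}x) ⋯ B(f x) B(x)` for `n : ℕ`. -/
def cocycleNat {M G : Type*} [Group G] (f : Equiv.Perm M) (B : M → G) : ℕ → M → G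
  | 0, _ => 1
  | n + 1, x => B ((f ^ n) x) * cocycleNat f B n x

open MeasureTheory

theorem Set.Finite.exists_mem_notMem_injOn_dist {E : Type*} [NormedAddCommGroup E]
    [InnerProductSpace ℝ E] [FiniteDimensional ℝ E] [Nontrivial E] {s U : Set E}
    (hs : s.Finite) (hU : IsOpen U) (hU' : U.Nonempty) :
    ∃ t ∈ U, t ∉ s ∧ s.InjOn (dist t) := by
  borelize E
  let μ : Measure E := Measure.addHaar
  have hpoints : ∀ᵐ t ∂μ, t ∉ s := measure_eq_zero_iff_ae_notMem.1 (hs.measure_zero μ)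
  have hbisectors : ∀ᵐ t ∂μ, s.InjOn (dist t) := by
    have hnull : μ (⋃ x ∈ s, ⋃ y ∈ s \ {x}, (AffineSubspace.perpBisector x y : Set E)) = 0 := by
      refine (measure_biUnion_null_iff hs.countable).2 fun x _ ↦
        (measure_biUnion_null_iff (hs.countable.mono Set.sdiff_subset)).2 fun y hy ↦
          Measure.addHaar_affineSubspace μ _ ?_
      exact AffineSubspace.perpBisector_eq_top.not.2 (Ne.symm hy.2)
    filter_upwards [measure_eq_zero_iff_ae_notMem.1 hnull] with t ht x hx y hy hxy
    by_contra hne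
    exact ht (Set.mem_biUnion hx (Set.mem_biUnion ⟨hy, Ne.symm hne⟩
      (AffineSubspace.mem_perpBisector_iff_dist_eq.2 hxy)))
  have : (ae (μ.restrict U)).NeBot := ae_neBot.2 <| by
    simpa using hU.measure_ne_zero μ hU'
  exact ((ae_restrict_mem hU.measurableSet).and
    (ae_restrict_of_ae (hpoints.and hbisectors))).exists

theorem ContinuousLinearMap.dense_setOf_isUnit_injOn_norm_spectrum {V : Type*}
    [NormedAddCommGroup V] [NormedSpace ℂ V] [FiniteDimensional ℂ V] :
    Dense {S : V →L[ℂ] V | IsUnit S ∧ (spectrum ℂ S).InjOn norm} := by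
  have : CompleteSpace V := FiniteDimensional.complete ℂ V
  refine Metric.dense_iff.2 fun T r hr ↦ ?_
  have hfin : (spectrum ℂ T).Finite := by
    rw [ContinuousLinearMap.spectrum_eq]
    exact Module.End.finite_spectrum _
  obtain ⟨t, ht, hσ, hinj⟩ :=
    hfin.neg.exists_mem_notMem_injOn_dist Metric.isOpen_ball ⟨0, Metric.mem_ball_self hr⟩
  have hspec : spectrum ℂ (algebraMap ℂ _ t + T) = (t + ·) '' spectrum ℂ T := by
    rw [← spectrum.singleton_add_eq, Set.singleton_add]
  refine ⟨algebraMap ℂ _ t + T, ?_, ?_, ?_⟩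
  · rw [Metric.mem_ball, dist_eq_norm, add_sub_cancel_right, norm_algebraMap]
    calc ‖t‖ * ‖(1 : V →L[ℂ] V)‖ ≤ ‖t‖ * 1 := by gcongr; exact norm_id_le
      _ < r := by simpa using ht
  · refine (spectrum.zero_notMem_iff (R := ℂ)).1 ?_
    rw [hspec]
    rintro ⟨a, ha, hta⟩
    exact hσ (by simpa [eq_neg_of_add_eq_zero_right hta] using ha)
  · rw [hspec]
    rintro _ ⟨a, ha, rfl⟩ _ ⟨b, hb, rfl⟩ hab
    have := hinj (Set.neg_mem_neg.2 ha) (Set.neg_mem_neg.2 hb)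
      (by simpa [dist_eq_norm, add_comm] using hab)
    rw [neg_inj.1 this]

section Cocycle

variable {M G : Type*} [Group G] (f : Equiv.Perm M)

theorem cocycleNat_succ' (B : M → G) (n : ℕ) (x : M) :
    cocycleNat f B (n + 1) x = cocycleNat f B n (f x) * B x := by
  induction n with
  | zero => simp [cocycleNat]
  | succ n ih =>
    rw [cocycleNat, ih, cocycleNat, ← mul_assoc, pow_succ, Equiv.Perm.mul_apply]

theorem cocycleNat_congr {B B' : M → G} {n : ℕ} {x : M}
    (h : ∀ i < n, B ((f ^ i) x) = B' ((f ^ i) x)) :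
    cocycleNat f B n x = cocycleNat f B' n x := by
  induction n with
  | zero => rfl
  | succ n ih =>
    rw [cocycleNat, cocycleNat, h n n.lt_succ_self, ih fun i hi ↦ h i (hi.trans n.lt_succ_self)]

theorem cocycleNat_update_succ_of_apply_ne [DecidableEq M] (A : M → G) (p : M) (g : G) {n : ℕ}
    (h : ∀ i < n, (f ^ (i + 1)) p ≠ p) :
    cocycleNat f (Function.update A p g) (n + 1) p = cocycleNat f A n (f p) * g := by
  rw [cocycleNat_succ', Function.update_self]
  congr 1
  refine cocycleNat_congr f fun i hi ↦ Function.update_of_ne ?_ _ _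
  simpa [pow_succ, Equiv.Perm.mul_apply] using h i hi

end Cocycle

theorem pinching_perturbation_general {M : Type*} [DecidableEq M] {d : ℕ}
    (f : Equiv.Perm M)
    (A : M → (EuclideanSpace ℂ (Fin d) →L[ℂ] EuclideanSpace ℂ (Fin d))ˣ)
    (p : M) (q : ℕ) (hq : 1 ≤ q)
    (horb : ∀ i j : ℕ, i < q → j < q → i ≠ j → (f ^ i) p ≠ (f ^ j) p)
    (ε : ℝ) (hε : 0 < ε) :
    ∃ B₀ : (EuclideanSpace ℂ (Fin d) →L[ℂ] EuclideanSpace ℂ (Fin d))ˣ,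
      ‖B₀.val - (A p).val‖ < ε ∧
      ∀ μ₁ μ₂ : ℂ,
        μ₁ ∈ spectrum ℂ (cocycleNat f (Function.update A p B₀) q p).val →
        μ₂ ∈ spectrum ℂ (cocycleNat f (Function.update A p B₀) q p).val →
        μ₁ ≠ μ₂ → ‖μ₁‖ ≠ ‖μ₂‖ := by
  obtain ⟨n, rfl⟩ : ∃ n, q = n + 1 := ⟨q - 1, by omega⟩
  set Q := cocycleNat f A n (f p)
  have hsplit : ∀ B₀, cocycleNat f (Function.update A p B₀) (n + 1) p = Q * B₀ :=
    fun B₀ ↦ cocycleNat_update_succ_of_apply_ne f A p B₀ fun i hi ↦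
      by simpa using horb (i + 1) 0 (by omega) (by omega) (by omega)
  obtain ⟨_, hB, S, ⟨hS, hS_inj⟩, rfl⟩ := Metric.dense_iff.1
    (((Units.mulLeft Q⁻¹).surjective.denseRange).dense_image (continuous_const_mul _)
      ContinuousLinearMap.dense_setOf_isUnit_injOn_norm_spectrum) (A p).val ε hε
  refine ⟨Q⁻¹ * hS.unit, by simpa [dist_eq_norm] using hB, fun μ₁ μ₂ h₁ h₂ hne heq ↦ hne ?_⟩
  rw [hsplit, mul_inv_cancel_left, IsUnit.unit_spec] at h₁ h₂
  exact hS_inj h₁ h₂ heq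

/-- Pinching perturbation: if `p` is a periodic point of period `q` of the bijection `f`
(with pairwise distinct orbit points), then for every `ε > 0` there is an invertible
matrix `B₀` with `‖B₀ - A(p)‖ < ε` such that, letting `B` equal `A` off `p` and
`B(p) = B₀`, all eigenvalues of `B^q(p) = A(f^{q-1}p) ⋯ A(f p) B₀` have pairwise
distinct absolute values. `GL(d,ℂ)` is realized as the units of the ring of continuous
linear endomorphisms of `ℂ^d`, whose eigenvalues form the spectrum. -/
theorem pinching_perturbation {M : Type*} [DecidableEq M] {d : ℕ}
    (f : Equiv.Perm M)
    (A : M → (EuclideanSpace ℂ (Fin d) →L[ℂ] EuclideanSpace ℂ (Fin d))ˣ)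
    (p : M) (q : ℕ) (hq : 1 ≤ q) (hper : (f ^ q) p = p)
    (horb : ∀ i j : ℕ, i < q → j < q → i ≠ j → (f ^ i) p ≠ (f ^ j) p)
    (ε : ℝ) (hε : 0 < ε) :
    ∃ B₀ : (EuclideanSpace ℂ (Fin d) →L[ℂ] EuclideanSpace ℂ (Fin d))ˣ,
      ‖B₀.val - (A p).val‖ < ε ∧
      ∀ μ₁ μ₂ : ℂ,
        μ₁ ∈ spectrum ℂ (cocycleNat f (Function.update A p B₀) q p).val →
        μ₂ ∈ spectrum ℂ (cocycleNat f (Function.update A p B₀) q p).val →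
        μ₁ ≠ μ₂ → ‖μ₁‖ ≠ ‖μ₂‖ :=
  pinching_perturbation_general f A p q hq horb ε hε
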